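/- arXiv:1603.03152 — 5 statements merged into one kernel-verified Lean document; each statement's English description precedes it below -/
import Mathlib

section
/- For every natural number l ≥ 1, one has 4(l+1)·sin²(π/2^(l+1)) ≤ 4l·sin²(π/2^l), and the inequality is strict for every l ≥ 2. In other words, the squared minimum distance d_min(2^l-PSK)² = 4l·sin²(π/2^l) of the 2^l-PSK constellation with symbol energy l is nonincreasing in l (strictly decreasing from l = 2 onwards). -/
open Real

/-- The squared minimum distance `4l·sin²(π/2^l)` of the `2^l`-PSK constellation
with symbol energy `l` is nonincreasing in `l ≥ 1`, and strictly decreasing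
from `l = 2` onwards. -/
theorem psk_min_distance_sq_antitone (l : ℕ) (hl : 1 ≤ l) :
    4 * (l + 1 : ℝ) * Real.sin (Real.pi / 2 ^ (l + 1)) ^ 2
        ≤ 4 * (l : ℝ) * Real.sin (Real.pi / 2 ^ l) ^ 2 ∧
    (2 ≤ l →
      4 * (l + 1 : ℝ) * Real.sin (Real.pi / 2 ^ (l + 1)) ^ 2
        < 4 * (l : ℝ) * Real.sin (Real.pi / 2 ^ l) ^ 2) := by
  set θ : ℝ := Real.pi / 2 ^ (l + 1) with hθ
  have hpow : (4 : ℝ) ≤ 2 ^ (l + 1) := by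
    calc (4 : ℝ) = 2 ^ 2 := by norm_num
    _ ≤ 2 ^ (l + 1) := by
        apply pow_le_pow_right₀ (by norm_num)
        omega
  have hθpos : 0 < θ := div_pos Real.pi_pos (by positivity)
  have hθle : θ ≤ Real.pi / 4 :=
    div_le_div_of_nonneg_left Real.pi_pos.le (by norm_num) hpow
  have hθltpi : θ < Real.pi := lt_of_le_of_lt hθle (by
    have := Real.pi_pos; linarith)
  have hsin : 0 < Real.sin θ := Real.sin_pos_of_pos_of_lt_pi hθpos hθltpi
  have hcos : Real.sqrt 2 / 2 ≤ Real.cos θ := by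
    rw [← Real.cos_pi_div_four]
    exact Real.cos_le_cos_of_nonneg_of_le_pi hθpos.le
      (by have := Real.pi_pos; linarith) hθle
  have hcossq : (1 : ℝ) / 2 ≤ Real.cos θ ^ 2 := by
    have h2 : (Real.sqrt 2 / 2) ^ 2 = 1 / 2 := by
      rw [div_pow, Real.sq_sqrt (by norm_num : (0:ℝ) ≤ 2)]; norm_num
    calc (1 : ℝ) / 2 = (Real.sqrt 2 / 2) ^ 2 := h2.symm
    _ ≤ Real.cos θ ^ 2 := by
        apply pow_le_pow_left₀ (by positivity) hcos
  have hdouble : Real.sin (Real.pi / 2 ^ l) = 2 * Real.sin θ * Real.cos θ := by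
    rw [← Real.sin_two_mul]
    congr 1
    rw [hθ, pow_succ]
    field_simp
  have hl1 : (1 : ℝ) ≤ (l : ℝ) := by exact_mod_cast hl
  rw [hdouble]
  constructor
  · nlinarith [sq_nonneg (Real.sin θ), mul_le_mul_of_nonneg_left hcossq
      (by positivity : (0:ℝ) ≤ 16 * (l : ℝ) * Real.sin θ ^ 2)]
  · intro h2l
    have hl2 : (2 : ℝ) ≤ (l : ℝ) := by exact_mod_cast h2l
    nlinarith [mul_pos hsin hsin, mul_le_mul_of_nonneg_left hcossq
      (by positivity : (0:ℝ) ≤ 16 * (l : ℝ) * Real.sin θ ^ 2)]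
end

section
/- Let η and N be natural numbers with 3 ≤ η ≤ N and N even. Then 2^(N−η+2) · (3N/2) / (2^N − 1) > 4N · sin²(π/2^η); that is, d_min-QAM(N,η)² > d_min-PSK(N,η)². -/
open Real

/-- For `3 ≤ η ≤ N` with `N` even, `d_min-QAM(N,η)² > d_min-PSK(N,η)²`. -/
theorem qam_beats_psk_even (η N : ℕ) (hη : 3 ≤ η) (hηN : η ≤ N) (hNe : Even N) :
    2 ^ (N - η + 2) * (3 * (N : ℝ) / 2) / (2 ^ N - 1)
      > 4 * (N : ℝ) * Real.sin (Real.pi / 2 ^ η) ^ 2 := by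
  have hN3 : 3 ≤ N := le_trans hη hηN
  have hN0 : (0:ℝ) < N := by exact_mod_cast Nat.lt_of_lt_of_le (by norm_num) hN3
  set x : ℝ := 2 ^ η with hx
  set y : ℝ := 2 ^ (N - η) with hy
  have hx8 : (8:ℝ) ≤ x := by
    rw [hx]
    calc (8:ℝ) = 2 ^ 3 := by norm_num
    _ ≤ 2 ^ η := by exact pow_le_pow_right₀ (by norm_num) hη
  have hx0 : (0:ℝ) < x := by linarith
  have hy1 : (1:ℝ) ≤ y := one_le_pow₀ (by norm_num : (1:ℝ) ≤ 2)
  have hy0 : (0:ℝ) < y := by linarith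
  have hxy : (2:ℝ) ^ N = x * y := by
    rw [hx, hy, ← pow_add]
    congr 1
    omega
  have harg0 : 0 < Real.pi / x := div_pos Real.pi_pos hx0
  have hsin_nonneg : 0 ≤ Real.sin (Real.pi / x) := by
    apply Real.sin_nonneg_of_nonneg_of_le_pi harg0.le
    have : Real.pi / x ≤ Real.pi / 1 := by
      apply div_le_div_of_nonneg_left Real.pi_pos.le one_pos (by linarith)
    simpa using this
  have hsin_lt : Real.sin (Real.pi / x) < Real.pi / x := Real.sin_lt harg0
  have hsq : Real.sin (Real.pi / x) ^ 2 < (Real.pi / x) ^ 2 :=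
    pow_lt_pow_left₀ hsin_lt hsin_nonneg (by norm_num)
  have hpi : Real.pi < 3.15 := Real.pi_lt_d2
  have hpi0 := Real.pi_pos
  -- RHS bound
  have hR : 4 * (N:ℝ) * Real.sin (Real.pi / x) ^ 2 < 4 * N * (Real.pi / x) ^ 2 := by
    have h4N : (0:ℝ) < 4 * N := by linarith
    exact (mul_lt_mul_iff_right₀ h4N).mpr hsq
  -- middle bound: 4N(π/x)² ≤ 6N/x
  have hmid : 4 * (N:ℝ) * (Real.pi / x) ^ 2 ≤ 6 * N / x := by
    rw [div_pow, ← mul_div_assoc, div_le_div_iff₀ (by positivity) hx0]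
    have hpi2 : Real.pi ^ 2 < 10 := by nlinarith
    have h1 : 4 * Real.pi ^ 2 ≤ 6 * x := by nlinarith
    nlinarith [mul_le_mul_of_nonneg_left h1 (mul_nonneg hN0.le hx0.le)]
  -- LHS bound: LHS > 6N/x
  have hL : 2 ^ (N - η + 2) * (3 * (N : ℝ) / 2) / (2 ^ N - 1) > 6 * N / x := by
    have h2 : (2:ℝ) ^ (N - η + 2) = 4 * y := by rw [hy, pow_add]; ring
    rw [h2, hxy]
    have hden : (0:ℝ) < x * y - 1 := by nlinarith
    rw [gt_iff_lt, div_lt_div_iff₀ hx0 hden]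
    nlinarith
  linarith
end

section
/- Let η and N be natural numbers with 3 ≤ η ≤ N and N odd. Then 2^(N−η+3) · (3N/2) / (2^(N+1) − 1) > 4N · sin²(π/2^η); that is, d_min-QAM(N,η)² > d_min-PSK(N,η)². -/
open Real

/-! Since `sin x ≤ x`, the PSK distance is at most `4N π² / 4^η`, while dropping the `- 1` in
the denominator shows that the QAM distance exceeds `6N / 2^η`. The comparison therefore comes
down to `2π² < 3 · 2^η`, and `2π² < 20 < 24 ≤ 3 · 2^η` once `η ≥ 3`. -/

lemma div_two_pow_succ_lt_two_pow_sub_mul_div {η N : ℕ} (h : η ≤ N) {c : ℝ} (hc : 0 < c) :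
    c / 2 ^ (η + 1) < 2 ^ (N - η) * c / (2 ^ (N + 1) - 1) := by
  have hpow : (2 : ℝ) ^ (N + 1) = 2 ^ (N - η) * 2 ^ (η + 1) := by
    rw [← pow_add]; congr 1; omega
  have hden : (1 : ℝ) < 2 ^ (N + 1) := one_lt_pow₀ one_lt_two (Nat.succ_ne_zero N)
  rw [div_lt_div_iff₀ (by positivity) (by linarith), hpow]
  nlinarith [mul_pos hc (pow_pos two_pos (N - η))]

lemma two_mul_pi_sq_lt_three_mul_two_pow {η : ℕ} (hη : 3 ≤ η) : 2 * π ^ 2 < 3 * 2 ^ η := by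
  have h8 : (8 : ℝ) ≤ 2 ^ η :=
    (by norm_num : (8 : ℝ) = 2 ^ 3).trans_le (pow_le_pow_right₀ one_le_two hη)
  nlinarith [pi_lt_d2, pi_pos]

theorem qam_beats_psk_odd_general (η N : ℕ) (hη : 3 ≤ η) (hηN : η ≤ N) :
    2 ^ (N - η + 3) * (3 * (N : ℝ) / 2) / (2 ^ (N + 1) - 1)
      > 4 * (N : ℝ) * Real.sin (Real.pi / 2 ^ η) ^ 2 := by
  have hN : (0 : ℝ) < N := by exact_mod_cast (show 0 < N by omega)
  calc 4 * (N : ℝ) * sin (π / 2 ^ η) ^ 2 ≤ 4 * (N : ℝ) * (π / 2 ^ η) ^ 2 :=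
        mul_le_mul_of_nonneg_left sin_sq_le_sq (by positivity)
    _ ≤ 12 * (N : ℝ) / 2 ^ (η + 1) := by
        rw [div_pow, ← mul_div_assoc, div_le_div_iff₀ (by positivity) (by positivity),
          pow_succ (2 : ℝ) η]
        nlinarith [mul_lt_mul_of_pos_left (two_mul_pi_sq_lt_three_mul_two_pow hη)
          (mul_pos hN (pow_pos two_pos η))]
    _ < 2 ^ (N - η) * (12 * (N : ℝ)) / (2 ^ (N + 1) - 1) :=
        div_two_pow_succ_lt_two_pow_sub_mul_div hηN (by positivity)
    _ = 2 ^ (N - η + 3) * (3 * (N : ℝ) / 2) / (2 ^ (N + 1) - 1) := by ring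

/-- For `3 ≤ η ≤ N` with `N` odd, `d_min-QAM(N,η)² > d_min-PSK(N,η)²`. -/
theorem qam_beats_psk_odd (η N : ℕ) (hη : 3 ≤ η) (hηN : η ≤ N) (hNo : Odd N) :
    2 ^ (N - η + 3) * (3 * (N : ℝ) / 2) / (2 ^ (N + 1) - 1)
      > 4 * (N : ℝ) * Real.sin (Real.pi / 2 ^ η) ^ 2 :=
  qam_beats_psk_odd_general η N hη hηN
end

section
/- Let N ≥ 3 be a natural number. If N is even then 4N > 2^(N+1)·(3N/2)/(2^N − 1), and if N is odd then 4N > 2^(N+2)·(3N/2)/(2^(N+1) − 1). That is, d_min-PSK(N,1)² = 4N·sin²(π/2) = 4N exceeds d_min-QAM(N,1)². -/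
open Real

/-- For `N ≥ 3`, `d_min-PSK(N,1)² = 4N` exceeds `d_min-QAM(N,1)²`, for both the
even-`N` and odd-`N` QAM formulas. -/
theorem psk_beats_qam_eta_one (N : ℕ) (hN : 3 ≤ N) :
    (Even N → 4 * (N : ℝ) > 2 ^ (N + 1) * (3 * (N : ℝ) / 2) / (2 ^ N - 1)) ∧
    (Odd N → 4 * (N : ℝ) > 2 ^ (N + 2) * (3 * (N : ℝ) / 2) / (2 ^ (N + 1) - 1)) := by
  have hNpos : (0:ℝ) < N := by exact_mod_cast Nat.lt_of_lt_of_le (by norm_num) hN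
  have h8 : (8:ℝ) ≤ 2 ^ N := by
    calc (8:ℝ) = 2 ^ 3 := by norm_num
    _ ≤ 2 ^ N := by exact pow_le_pow_right₀ (by norm_num) hN
  have h1 : (0:ℝ) < 2 ^ N - 1 := by linarith
  have h2 : (0:ℝ) < 2 ^ (N + 1) - 1 := by
    have : (2:ℝ)^N ≤ 2^(N+1) := by exact pow_le_pow_right₀ (by norm_num) (Nat.le_succ N)
    linarith
  constructor
  · intro _
    rw [gt_iff_lt, div_lt_iff₀ h1, pow_succ]
    nlinarith [mul_pos hNpos (show (0:ℝ) < 2^N - 4 by linarith)]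
  · intro _
    rw [gt_iff_lt, div_lt_iff₀ h2]
    have he : (2:ℝ)^(N+2) = 2^(N+1) * 2 := by ring
    have h16 : (16:ℝ) ≤ 2^(N+1) := by
      rw [pow_succ]; linarith
    rw [he, pow_succ]
    nlinarith [mul_pos hNpos (show (0:ℝ) < 2^N * 2 - 4 by linarith)]
end

section
/- Let N ≥ 3 be a natural number. If N is even then 2N > 2^N·(3N/2)/(2^N − 1), and if N is odd then 2N > 2^(N+1)·(3N/2)/(2^(N+1) − 1). That is, d_min-PSK(N,2)² = 4N·sin²(π/4) = 2N exceeds d_min-QAM(N,2)². -/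
open Real

/-- For `N ≥ 3`, `d_min-PSK(N,2)² = 2N` exceeds `d_min-QAM(N,2)²`, for both the
even-`N` and odd-`N` QAM formulas. -/
theorem psk_beats_qam_eta_two (N : ℕ) (hN : 3 ≤ N) :
    (Even N → 2 * (N : ℝ) > 2 ^ N * (3 * (N : ℝ) / 2) / (2 ^ N - 1)) ∧
    (Odd N → 2 * (N : ℝ) > 2 ^ (N + 1) * (3 * (N : ℝ) / 2) / (2 ^ (N + 1) - 1)) := by
  have hNpos : (0 : ℝ) < N := by exact_mod_cast Nat.lt_of_lt_of_le (by norm_num) hN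
  have hp : (8 : ℝ) ≤ 2 ^ N := by
    calc (8 : ℝ) = 2 ^ 3 := by norm_num
    _ ≤ 2 ^ N := by exact_mod_cast Nat.pow_le_pow_right (by norm_num) hN
  constructor
  · intro _
    rw [gt_iff_lt, div_lt_iff₀ (by linarith)]
    nlinarith [hNpos, hp]
  · intro _
    have hp' : (16 : ℝ) ≤ 2 ^ (N + 1) := by rw [pow_succ]; linarith
    rw [gt_iff_lt, div_lt_iff₀ (by linarith)]
    nlinarith [hNpos, hp']
end
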